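/- For a real number a with a ≠ 0 and a ≠ 1 and a^2 ≠ 2a + 1, the 19 points P1, ..., P19 of the attempted C2 configuration do NOT all have the required incidences: specifically, P17 = (0, a-1, a(a-2)) does not lie on the line L_{13,14}: a(a-2)x + (a-1)y - (a-1)^2 z = 0. -/
import Mathlib

/-- For a ≠ 0, a ≠ 1 with a^2 ≠ 2a + 1, the point P17 = (0, a-1, a(a-2)) does not lie on
the line L_{13,14}: a(a-2)x + (a-1)y - (a-1)^2 z = 0. -/
theorem c2_fails_without_condition (a : ℝ) (ha0 : a ≠ 0) (ha1 : a ≠ 1)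
    (h : a^2 ≠ 2*a + 1) :
    a * (a - 2) * 0 + (a - 1) * (a - 1) - (a - 1)^2 * (a * (a - 2)) ≠ 0 := by
  intro hc
  have h1 : a - 1 ≠ 0 := sub_ne_zero.mpr ha1
  have h2 : 1 - (a^2 - 2*a) ≠ 0 := by
    intro hz; apply h; nlinarith [hz]
  apply mul_ne_zero (pow_ne_zero 2 h1) h2
  nlinarith [hc]
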